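/- arXiv:2509.22514 — 6 statements merged into one kernel-verified Lean document; each statement's English description precedes it below -/
import Mathlib

section
/- Let N ∈ (1,∞), K ∈ ℝ and a < b be real numbers. Let h ∈ C²((a,b)) with h > 0 on (a,b), and let κ : (a,b) → ℝ be continuous with (log h)''(t) + ((log h)'(t))²/(N−1) ≤ −κ(t) for almost every t ∈ (a,b). Let G ∈ C¹((a,b)) satisfy the Riccati equation G'(t) + G(t)²/(N−1) = −K for all t ∈ (a,b). Then the function ψ := max((log h)' − G, 0) is locally Lipschitz on (a,b) and satisfies, for almost every t ∈ (a,b), the differential inequality ψ'(t) + ψ(t)²/(N−1) + 2·ψ(t)·G(t)/(N−1) ≤ max(K − κ(t), 0). -/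
open Real MeasureTheory Filter Set
open scoped ENNReal NNReal Topology

/-!
On the set where `u := (log h)' - G` is positive, `ψ = u` near the point, and the identity
`(u^2 + 2 u G) / (N - 1) = ((log h)'^2 - G^2) / (N - 1)` turns `ψ' + ψ^2/(N-1) + 2ψG/(N-1)` into
the difference of the Riccati expressions of `log h` and of `G`, which is at most `K - κ`.
Where `u ≤ 0`, `ψ` attains a local minimum (or vanishes near the point), so `ψ' = 0` and the
left-hand side vanishes. Local Lipschitz continuity comes from `u ∈ C¹`.
-/

def LocLipschitzOn (f : ℝ → ℝ) (s : Set ℝ) : Prop :=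
  ∀ x ∈ s, ∃ C : NNReal, ∃ t ∈ nhdsWithin x s, LipschitzOnWith C f t

theorem ContDiffOn.locLipschitzOn {f : ℝ → ℝ} {s : Set ℝ} (hf : ContDiffOn ℝ 1 f s)
    (hs : IsOpen s) : LocLipschitzOn f s := by
  intro x hx
  obtain ⟨C, t, ht, hlip⟩ := (hf.contDiffAt (hs.mem_nhds hx)).exists_lipschitzOnWith
  exact ⟨C, t, mem_nhdsWithin_of_mem_nhds ht, hlip⟩

theorem LocLipschitzOn.max_const {f : ℝ → ℝ} {s : Set ℝ} (hf : LocLipschitzOn f s) (c : ℝ) :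
    LocLipschitzOn (fun t => max (f t) c) s := by
  intro x hx
  obtain ⟨C, t, ht, hlip⟩ := hf x hx
  exact ⟨1 * C, t, ht, (LipschitzWith.id.max_const c).comp_lipschitzOnWith hlip⟩

theorem deriv_max_zero_of_nonpos {u : ℝ → ℝ} {t : ℝ} (hu : ContinuousAt u t) (ht : u t ≤ 0) :
    deriv (fun r => max (u r) 0) t = 0 := by
  rcases ht.lt_or_eq with hlt | heq
  · have hzero : (fun r => max (u r) 0) =ᶠ[𝓝 t] fun _ => 0 :=
      (hu.eventually (gt_mem_nhds hlt)).mono fun r hr => max_eq_right hr.le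
    rw [hzero.deriv_eq, deriv_const]
  · refine IsLocalMin.deriv_eq_zero (Eventually.of_forall fun r => ?_)
    simp only [heq, max_self, le_max_right]

theorem deriv_max_zero_of_pos {u : ℝ → ℝ} {t : ℝ} (hu : ContinuousAt u t) (ht : 0 < u t) :
    deriv (fun r => max (u r) 0) t = deriv u t :=
  EventuallyEq.deriv_eq <| (hu.eventually (lt_mem_nhds ht)).mono fun _ hr => max_eq_left hr.le

theorem riccati_sub_eq (c l l' g g' : ℝ) :
    (l' - g') + (l - g) ^ 2 / c + 2 * (l - g) * g / c = (l' + l ^ 2 / c) - (g' + g ^ 2 / c) := by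
  ring

theorem riccati_comparison_deficit_general
    (N K : ℝ) (a b : ℝ)
    (h κ G : ℝ → ℝ)
    (hh : ContDiffOn ℝ 2 h (Set.Ioo a b))
    (hpos : ∀ t ∈ Set.Ioo a b, 0 < h t)
    (hineq : ∀ᵐ t : ℝ ∂volume, t ∈ Set.Ioo a b →
      deriv (deriv (fun s => Real.log (h s))) t +
        (deriv (fun s => Real.log (h s)) t) ^ 2 / (N - 1) ≤ -κ t)
    (hG : ContDiffOn ℝ 1 G (Set.Ioo a b))
    (hRiccati : ∀ t ∈ Set.Ioo a b, deriv G t + G t ^ 2 / (N - 1) = -K) :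
    LocLipschitzOn (fun t => max (deriv (fun s => Real.log (h s)) t - G t) 0)
      (Set.Ioo a b) ∧
    ∀ᵐ t : ℝ ∂volume, t ∈ Set.Ioo a b →
      deriv (fun r => max (deriv (fun s => Real.log (h s)) r - G r) 0) t +
          (max (deriv (fun s => Real.log (h s)) t - G t) 0) ^ 2 / (N - 1) +
          2 * max (deriv (fun s => Real.log (h s)) t - G t) 0 * G t / (N - 1) ≤
        max (K - κ t) 0 := by
  set L : ℝ → ℝ := fun s => Real.log (h s)
  have hL' : ContDiffOn ℝ 1 (deriv L) (Ioo a b) :=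
    (hh.log fun x hx => (hpos x hx).ne').deriv_of_isOpen isOpen_Ioo (by norm_num)
  have hu : ContDiffOn ℝ 1 (fun t => deriv L t - G t) (Ioo a b) := hL'.sub hG
  refine ⟨(hu.locLipschitzOn isOpen_Ioo).max_const 0, ?_⟩
  filter_upwards [hineq] with t hLt ht
  have hdiff {f : ℝ → ℝ} (hf : ContDiffOn ℝ 1 f (Ioo a b)) : DifferentiableAt ℝ f t :=
    (hf.contDiffAt (isOpen_Ioo.mem_nhds ht)).differentiableAt one_ne_zero
  rcases le_or_gt (deriv L t - G t) 0 with hu_nonpos | hu_pos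
  · rw [deriv_max_zero_of_nonpos (hdiff hu).continuousAt hu_nonpos, max_eq_right hu_nonpos]
    simp
  · rw [deriv_max_zero_of_pos (hdiff hu).continuousAt hu_pos, max_eq_left hu_pos.le,
      deriv_fun_sub (hdiff hL') (hdiff hG), riccati_sub_eq, hRiccati t ht]
    linarith [hLt ht, le_max_left (K - κ t) 0]

/-- Riccati comparison for the mean curvature deficit, smooth case.
If `h ∈ C²((a,b))` is positive and satisfies `(log h)'' + ((log h)')²/(N−1) ≤ −κ` a.e.,
and `G ∈ C¹((a,b))` solves `G' + G²/(N−1) = −K`, then `ψ := max((log h)' − G, 0)` is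
locally Lipschitz and satisfies `ψ' + ψ²/(N−1) + 2ψG/(N−1) ≤ max(K−κ, 0)` a.e. on `(a,b)`. -/
theorem riccati_comparison_deficit
    (N K : ℝ) (hN : 1 < N) (a b : ℝ) (hab : a < b)
    (h κ G : ℝ → ℝ)
    (hh : ContDiffOn ℝ 2 h (Set.Ioo a b))
    (hpos : ∀ t ∈ Set.Ioo a b, 0 < h t)
    (hκ : ContinuousOn κ (Set.Ioo a b))
    (hineq : ∀ᵐ t : ℝ ∂volume, t ∈ Set.Ioo a b →
      deriv (deriv (fun s => Real.log (h s))) t +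
        (deriv (fun s => Real.log (h s)) t) ^ 2 / (N - 1) ≤ -κ t)
    (hG : ContDiffOn ℝ 1 G (Set.Ioo a b))
    (hRiccati : ∀ t ∈ Set.Ioo a b, deriv G t + G t ^ 2 / (N - 1) = -K) :
    LocLipschitzOn (fun t => max (deriv (fun s => Real.log (h s)) t - G t) 0)
      (Set.Ioo a b) ∧
    ∀ᵐ t : ℝ ∂volume, t ∈ Set.Ioo a b →
      deriv (fun r => max (deriv (fun s => Real.log (h s)) r - G r) 0) t +
          (max (deriv (fun s => Real.log (h s)) t - G t) 0) ^ 2 / (N - 1) +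
          2 * max (deriv (fun s => Real.log (h s)) t - G t) 0 * G t / (N - 1) ≤
        max (K - κ t) 0 :=
  riccati_comparison_deficit_general N K a b h κ G hh hpos hineq hG hRiccati
end

section
/- Let N ∈ (1,∞), K ∈ ℝ, p ≥ 1 with p > N/2, and a < b be real numbers. Let h ∈ C²((a,b)) with h > 0 on (a,b), let κ : (a,b) → ℝ be continuous with (log h)''(t) + ((log h)'(t))²/(N−1) ≤ −κ(t) for almost every t ∈ (a,b), let G ∈ C¹((a,b)) satisfy G'(t) + G(t)²/(N−1) = −K on (a,b), and let φ ∈ C¹((a,b)) with φ > 0. Set ψ := max((log h)' − G, 0) and ρ(t) := max(K − κ(t), 0). Then the function φ·ψ^{2p−1}·h is locally Lipschitz on (a,b) and for almost every r ∈ (a,b) it holds (φ·ψ^{2p−1}·h)'(r) ≤ (2p−1)·ρ(r)·φ(r)·ψ(r)^{2p−2}·h(r) − ((2p−N)/(N−1))·φ(r)·ψ(r)^{2p}·h(r) + max(φ'(r)/φ(r) − ((4p−N−1)/(N−1))·G(r), 0)·φ(r)·ψ(r)^{2p−1}·h(r). -/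
/-! Local Lipschitz continuity: `x ↦ max x 0 ^ q` is convex for `q ≥ 1`, hence locally
Lipschitz, and products of locally Lipschitz real functions are locally Lipschitz.

For the derivative, write `w := (log h)' - G`. Where `w > 0` the weight is differentiable, and
subtracting the Riccati equation for `G` from the Riccati inequality for `log h` gives
`w' ≤ ρ - w (w + 2G)/(N - 1)`; inserting this and
`φ' ≤ (max (φ'/φ - (4p-N-1)/(N-1) G) 0 + (4p-N-1)/(N-1) G) φ` into the product rule leaves an
algebraic identity. Where `w ≤ 0` the nonnegative weight vanishes, so it has a local minimum
and its derivative is `0`, while the right-hand side is nonnegative. -/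

open Real MeasureTheory Filter Set
open scoped ENNReal NNReal Topology

section LocallyLipschitzOn

variable {α β γ : Type*} [PseudoEMetricSpace α] [PseudoEMetricSpace β] [PseudoEMetricSpace γ]
  {s : Set α}

lemma LocallyLipschitz.comp_locallyLipschitzOn {g : β → γ} {f : α → β}
    (hg : LocallyLipschitz g) (hf : LocallyLipschitzOn s f) : LocallyLipschitzOn s (g ∘ f) :=
  locallyLipschitzOn_iff_restrict.2 (hg.comp hf.restrict)

lemma LocallyLipschitzOn.prodMk {f : α → β} {g : α → γ} (hf : LocallyLipschitzOn s f)
    (hg : LocallyLipschitzOn s g) : LocallyLipschitzOn s fun x => (f x, g x) :=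
  locallyLipschitzOn_iff_restrict.2 (hf.restrict.prodMk hg.restrict)

lemma LocallyLipschitzOn.real_mul {f g : α → ℝ} (hf : LocallyLipschitzOn s f)
    (hg : LocallyLipschitzOn s g) : LocallyLipschitzOn s fun x => f x * g x :=
  (contDiff_mul (𝕜 := ℝ)).locallyLipschitz.comp_locallyLipschitzOn (hf.prodMk hg)

end LocallyLipschitzOn

lemma convexOn_max_zero_rpow {q : ℝ} (hq : 1 ≤ q) :
    ConvexOn ℝ univ fun x : ℝ => max x 0 ^ q := by
  have himage : (fun x : ℝ => max x 0) '' univ = Ici 0 := by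
    ext y
    exact ⟨fun ⟨x, _, hx⟩ => hx ▸ le_max_right x 0, fun hy => ⟨y, mem_univ y, max_eq_left hy⟩⟩
  refine ConvexOn.comp (g := fun y : ℝ => y ^ q) (f := fun x : ℝ => max x 0) ?_ ?_ ?_
  · exact himage ▸ convexOn_rpow hq
  · exact (convexOn_id convex_univ).sup (convexOn_const 0 convex_univ)
  · exact himage ▸ fun x hx y _ hxy => rpow_le_rpow hx hxy (by linarith)

lemma locallyLipschitzOn_mul_max_zero_rpow_mul {E : Type*} [NormedAddCommGroup E]
    [NormedSpace ℝ E] {s : Set E} (hs : Convex ℝ s) {φ v h : E → ℝ} {q : ℝ} (hq : 1 ≤ q)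
    (hφ : ContDiffOn ℝ 1 φ s) (hv : ContDiffOn ℝ 1 v s) (hh : ContDiffOn ℝ 1 h s) :
    LocallyLipschitzOn s fun t => φ t * max (v t) 0 ^ q * h t :=
  ((hφ.locallyLipschitzOn hs).real_mul <| (convexOn_max_zero_rpow hq).locallyLipschitz
    |>.comp_locallyLipschitzOn (hv.locallyLipschitzOn hs)).real_mul (hh.locallyLipschitzOn hs)

lemma HasDerivAt.max_zero_rpow {v : ℝ → ℝ} {v' r : ℝ} (q : ℝ) (hv : HasDerivAt v v' r)
    (hr : 0 < v r) : HasDerivAt (fun t => max (v t) 0 ^ q) (v' * q * v r ^ (q - 1)) r := by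
  have hev : (fun t => max (v t) 0 ^ q) =ᶠ[𝓝 r] fun t => v t ^ q :=
    (hv.continuousAt.eventually (lt_mem_nhds hr)).mono fun t ht => by
      simp only [max_eq_left ht.le]
  exact (hv.rpow_const (Or.inl hr.ne')).congr_of_eventuallyEq hev

lemma deriv_mul_max_zero_rpow_mul_eq_zero {φ v h : ℝ → ℝ} {s : Set ℝ} {r q : ℝ} (hs : s ∈ 𝓝 r)
    (hq : q ≠ 0) (hφ : ∀ t ∈ s, 0 ≤ φ t) (hh : ∀ t ∈ s, 0 ≤ h t) (hr : v r ≤ 0) :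
    deriv (fun t => φ t * max (v t) 0 ^ q * h t) r = 0 := by
  refine IsLocalMin.deriv_eq_zero ?_
  filter_upwards [hs] with t ht
  rw [max_eq_right hr, zero_rpow hq, mul_zero, zero_mul]
  exact mul_nonneg (mul_nonneg (hφ t ht) (rpow_nonneg (le_max_right _ _) _)) (hh t ht)

lemma sub_le_of_riccati {N L L' G G' κ K : ℝ} (hL : L' + L ^ 2 / (N - 1) ≤ -κ)
    (hG : G' + G ^ 2 / (N - 1) = -K) :
    L' - G' ≤ max (K - κ) 0 - (L - G) * (L + G) / (N - 1) := by
  have hsq : (L - G) * (L + G) / (N - 1) = L ^ 2 / (N - 1) - G ^ 2 / (N - 1) := by ring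
  linarith [le_max_left (K - κ) 0]

lemma weighted_deficit_algebraic_bound {N p L G X ρ M φ φ' H : ℝ} (hN : 1 < N)
    (hp : 1 ≤ 2 * p) (hw : 0 < L - G) (hφ : 0 < φ) (hH : 0 < H)
    (hX : X ≤ ρ - (L - G) * (L + G) / (N - 1))
    (hφ' : φ' / φ - (4 * p - N - 1) / (N - 1) * G ≤ M) :
    (φ' * (L - G) ^ (2 * p - 1) + φ * (X * (2 * p - 1) * (L - G) ^ (2 * p - 1 - 1))) * H
        + φ * (L - G) ^ (2 * p - 1) * (L * H) ≤
      (2 * p - 1) * ρ * φ * (L - G) ^ (2 * p - 2) * H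
        - ((2 * p - N) / (N - 1)) * φ * (L - G) ^ (2 * p) * H
        + M * φ * (L - G) ^ (2 * p - 1) * H := by
  set w := L - G with hw_def
  set E := w ^ (2 * p - 2)
  have hE : 0 < E := rpow_pos_of_pos hw _
  have hpow₀ : w ^ (2 * p - 1 - 1) = E := by rw [sub_sub, one_add_one_eq_two]
  have hpow₁ : w ^ (2 * p - 1) = E * w := by rw [← rpow_add_one hw.ne']; ring_nf
  have hpow₂ : w ^ (2 * p) = E * w * w := by
    rw [← rpow_add_one hw.ne', ← rpow_add_one hw.ne']; ring_nf
  have hφ'_le : φ' ≤ (M + (4 * p - N - 1) / (N - 1) * G) * φ := by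
    have := mul_le_mul_of_nonneg_right (sub_le_iff_le_add.1 hφ') hφ.le
    rwa [div_mul_cancel₀ _ hφ.ne'] at this
  rw [hpow₀, hpow₁, hpow₂]
  have hN' : N - 1 ≠ 0 := by linarith
  -- the coefficients of `w ^ 2` and `w * G` cancel exactly
  have key : (2 * p - 1) * ρ * φ * E * H - ((2 * p - N) / (N - 1)) * φ * (E * w * w) * H
        + M * φ * (E * w) * H
      - ((φ' * (E * w) + φ * (X * (2 * p - 1) * E)) * H + φ * (E * w) * (L * H)) =
      (2 * p - 1) * (φ * E * H) * (ρ - w * (L + G) / (N - 1) - X)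
        + E * w * H * ((M + (4 * p - N - 1) / (N - 1) * G) * φ - φ') := by
    rw [hw_def]; field_simp; ring
  have hX' := sub_nonneg.2 hX
  have hφ'' := sub_nonneg.2 hφ'_le
  have hq : 0 ≤ 2 * p - 1 := by linarith
  have : 0 ≤ (2 * p - 1) * (φ * E * H) * (ρ - w * (L + G) / (N - 1) - X)
      + E * w * H * ((M + (4 * p - N - 1) / (N - 1) * G) * φ - φ') := by positivity
  linarith

theorem weighted_deficit_derivative_estimate_general
    (N K p : ℝ) (hN : 1 < N) (hp1 : 1 ≤ p)
    (a b : ℝ)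
    (h κ G φ : ℝ → ℝ)
    (hh : ContDiffOn ℝ 2 h (Set.Ioo a b))
    (hpos : ∀ t ∈ Set.Ioo a b, 0 < h t)
    (hineq : ∀ᵐ t : ℝ ∂volume, t ∈ Set.Ioo a b →
      deriv (deriv (fun s => Real.log (h s))) t +
        (deriv (fun s => Real.log (h s)) t) ^ 2 / (N - 1) ≤ -κ t)
    (hG : ContDiffOn ℝ 1 G (Set.Ioo a b))
    (hRiccati : ∀ t ∈ Set.Ioo a b, deriv G t + G t ^ 2 / (N - 1) = -K)
    (hφ : ContDiffOn ℝ 1 φ (Set.Ioo a b))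
    (hφpos : ∀ t ∈ Set.Ioo a b, 0 < φ t) :
    LocLipschitzOn
      (fun t => φ t * max (deriv (fun s => Real.log (h s)) t - G t) 0 ^ (2 * p - 1) * h t)
      (Set.Ioo a b) ∧
    ∀ᵐ r : ℝ ∂volume, r ∈ Set.Ioo a b →
      deriv (fun t =>
          φ t * max (deriv (fun s => Real.log (h s)) t - G t) 0 ^ (2 * p - 1) * h t) r ≤
        (2 * p - 1) * max (K - κ r) 0 * φ r *
            max (deriv (fun s => Real.log (h s)) r - G r) 0 ^ (2 * p - 2) * h r
          - ((2 * p - N) / (N - 1)) * φ r *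
            max (deriv (fun s => Real.log (h s)) r - G r) 0 ^ (2 * p) * h r
          + max (deriv φ r / φ r - ((4 * p - N - 1) / (N - 1)) * G r) 0 * φ r *
            max (deriv (fun s => Real.log (h s)) r - G r) 0 ^ (2 * p - 1) * h r := by
  set L := deriv fun s => Real.log (h s)
  have hL : ContDiffOn ℝ 1 L (Ioo a b) :=
    (hh.log fun t ht => (hpos t ht).ne').deriv_of_isOpen isOpen_Ioo (by norm_num)
  refine ⟨fun x hx => locallyLipschitzOn_mul_max_zero_rpow_mul (convex_Ioo a b)
    (by linarith) hφ (hL.sub hG) (hh.of_le (by norm_num)) hx, ?_⟩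
  filter_upwards [hineq] with r hLr hr
  have hdiff {f : ℝ → ℝ} {n : WithTop ℕ∞} (hf : ContDiffOn ℝ n f (Ioo a b)) (hn : 1 ≤ n) :
      HasDerivAt f (deriv f r) r :=
    ((hf.differentiableOn (by positivity)).differentiableAt (isOpen_Ioo.mem_nhds hr)).hasDerivAt
  rcases le_or_gt (L r - G r) 0 with hw | hw
  · rw [deriv_mul_max_zero_rpow_mul_eq_zero (isOpen_Ioo.mem_nhds hr) (by linarith)
      (fun t ht => (hφpos t ht).le) (fun t ht => (hpos t ht).le) hw, max_eq_right hw,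
      zero_rpow (x := 2 * p - 1) (by linarith), zero_rpow (x := 2 * p) (by linarith)]
    simp only [mul_zero, zero_mul, sub_zero, add_zero]
    exact mul_nonneg (mul_nonneg (mul_nonneg (mul_nonneg (by linarith) (le_max_right _ _))
      (hφpos r hr).le) (rpow_nonneg le_rfl _)) (hpos r hr).le
  · have hdh : HasDerivAt h (L r * h r) r := by
      have hL_eq : L r = deriv h r / h r :=
        ((hdiff hh (by norm_num)).log (hpos r hr).ne').deriv
      rw [hL_eq, div_mul_cancel₀ _ (hpos r hr).ne']
      exact hdiff hh (by norm_num)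
    have hF := ((hdiff hφ le_rfl).fun_mul (((hdiff hL le_rfl).fun_sub
      (hdiff hG le_rfl)).max_zero_rpow (2 * p - 1) hw)).fun_mul hdh
    rw [hF.deriv, max_eq_left hw.le]
    exact weighted_deficit_algebraic_bound hN (by linarith) hw (hφpos r hr) (hpos r hr)
      (sub_le_of_riccati (hLr hr) (hRiccati r hr)) (le_max_left _ _)

/-- derivative estimate for the weighted deficit `φ·ψ^{2p−1}·h`, smooth case.
With `ψ := max((log h)' − G, 0)` and `ρ := max(K − κ, 0)`, the function `φ ψ^{2p−1} h` is
locally Lipschitz on `(a,b)` and for a.e. `r ∈ (a,b)`: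
`(φ ψ^{2p−1} h)'(r) ≤ (2p−1) ρ φ ψ^{2p−2} h − ((2p−N)/(N−1)) φ ψ^{2p} h
  + max(φ'/φ − ((4p−N−1)/(N−1)) G, 0) φ ψ^{2p−1} h`. -/
theorem weighted_deficit_derivative_estimate
    (N K p : ℝ) (hN : 1 < N) (hp1 : 1 ≤ p) (hp : N / 2 < p)
    (a b : ℝ) (hab : a < b)
    (h κ G φ : ℝ → ℝ)
    (hh : ContDiffOn ℝ 2 h (Set.Ioo a b))
    (hpos : ∀ t ∈ Set.Ioo a b, 0 < h t)
    (hκ : ContinuousOn κ (Set.Ioo a b))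
    (hineq : ∀ᵐ t : ℝ ∂volume, t ∈ Set.Ioo a b →
      deriv (deriv (fun s => Real.log (h s))) t +
        (deriv (fun s => Real.log (h s)) t) ^ 2 / (N - 1) ≤ -κ t)
    (hG : ContDiffOn ℝ 1 G (Set.Ioo a b))
    (hRiccati : ∀ t ∈ Set.Ioo a b, deriv G t + G t ^ 2 / (N - 1) = -K)
    (hφ : ContDiffOn ℝ 1 φ (Set.Ioo a b))
    (hφpos : ∀ t ∈ Set.Ioo a b, 0 < φ t) :
    LocLipschitzOn
      (fun t => φ t * max (deriv (fun s => Real.log (h s)) t - G t) 0 ^ (2 * p - 1) * h t)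
      (Set.Ioo a b) ∧
    ∀ᵐ r : ℝ ∂volume, r ∈ Set.Ioo a b →
      deriv (fun t =>
          φ t * max (deriv (fun s => Real.log (h s)) t - G t) 0 ^ (2 * p - 1) * h t) r ≤
        (2 * p - 1) * max (K - κ r) 0 * φ r *
            max (deriv (fun s => Real.log (h s)) r - G r) 0 ^ (2 * p - 2) * h r
          - ((2 * p - N) / (N - 1)) * φ r *
            max (deriv (fun s => Real.log (h s)) r - G r) 0 ^ (2 * p) * h r
          + max (deriv φ r / φ r - ((4 * p - N - 1) / (N - 1)) * G r) 0 * φ r *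
            max (deriv (fun s => Real.log (h s)) r - G r) 0 ^ (2 * p - 1) * h r :=
  weighted_deficit_derivative_estimate_general N K p hN hp1 a b h κ G φ hh hpos hineq hG hRiccati hφ
    hφpos
end

section
/- Let (X,d) be a separable geodesic metric space equipped with a Borel measure m that is finite on bounded sets, and let {x_i}_{i∈I} be a countable collection of distinct points of X indexed by I ⊆ ℕ. Fix i,j ∈ I and δ > −d(x_i,x_j). Then the set U_{i,j}^δ := {x ∈ X : d(x,x_i) − d(x,x_j) < δ} is star-shaped at x_i. Moreover, there exists a countable set S_{i,j} ⊆ (−d(x_i,x_j), ∞) such that for every δ ∈ (−d(x_i,x_j), ∞) \ S_{i,j} one has m({x ∈ X : d(x,x_i) − d(x,x_j) = δ}) = 0. -/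
open Set MeasureTheory
open scoped ENNReal

/-- `γ` is a constant-speed geodesic from `x` to `y`, parametrized on `[0,1]`. -/
def IsGeodesicCurve {X : Type*} [MetricSpace X] (γ : ℝ → X) (x y : X) : Prop :=
  γ 0 = x ∧ γ 1 = y ∧
  ∀ s ∈ Set.Icc (0:ℝ) 1, ∀ t ∈ Set.Icc (0:ℝ) 1, dist (γ s) (γ t) = |s - t| * dist x y

/-- A metric space is geodesic if any two points are joined by a constant-speed geodesic. -/
def IsGeodesicSpace (X : Type*) [MetricSpace X] : Prop :=
  ∀ x y : X, ∃ γ : ℝ → X, IsGeodesicCurve γ x y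

/-- A set `T` is star-shaped at `x` if every point of `T` is connected to `x` by a
constant-speed geodesic entirely contained in `T`. -/
def StarShapedAt {X : Type*} [MetricSpace X] (T : Set X) (x : X) : Prop :=
  ∀ y ∈ T, ∃ γ : ℝ → X, IsGeodesicCurve γ x y ∧ ∀ t ∈ Set.Icc (0:ℝ) 1, γ t ∈ T

/-- for `δ > −d(x_i,x_j)` the sublevel set
`U_{i,j}^δ = {x : d(x,x_i) − d(x,x_j) < δ}` is star-shaped at `x_i`, and all but
countably many of the corresponding level sets are `m`-negligible. -/
theorem Uset_starShaped_and_null_levels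
    {X : Type*} [MetricSpace X] [TopologicalSpace.SeparableSpace X]
    [MeasurableSpace X] [BorelSpace X]
    (hgeo : IsGeodesicSpace X)
    (m : Measure X)
    (hm : ∀ s : Set X, Bornology.IsBounded s → m s < ⊤)
    (I : Set ℕ) (x : ℕ → X) (hinj : Set.InjOn x I)
    (i j : ℕ) (hi : i ∈ I) (hj : j ∈ I)
    (δ : ℝ) (hδ : -dist (x i) (x j) < δ) :
    StarShapedAt {p : X | dist p (x i) - dist p (x j) < δ} (x i) ∧
    ∃ S : Set ℝ, S.Countable ∧ S ⊆ Set.Ioi (-dist (x i) (x j)) ∧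
      ∀ δ' ∈ Set.Ioi (-dist (x i) (x j)) \ S,
        m {p : X | dist p (x i) - dist p (x j) = δ'} = 0 := by
  constructor
  · intro y hy
    obtain ⟨γ, h0, h1, hγ⟩ := hgeo (x i) y
    refine ⟨γ, ⟨h0, h1, hγ⟩, ?_⟩
    intro t ht
    simp only [Set.mem_setOf_eq] at hy ⊢
    obtain ⟨ht0, ht1⟩ := ht
    have hdi : dist (γ t) (x i) = t * dist (x i) y := by
      have h := hγ t ⟨ht0, ht1⟩ 0 ⟨le_refl 0, zero_le_one⟩
      rw [h0] at h
      simpa [abs_of_nonneg ht0] using h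
    have hdy : dist (γ t) y = (1 - t) * dist (x i) y := by
      have h := hγ t ⟨ht0, ht1⟩ 1 ⟨zero_le_one, le_refl 1⟩
      rw [h1] at h
      rw [h, abs_of_nonpos (by linarith)]
      ring
    have htri : dist y (x j) ≤ dist y (γ t) + dist (γ t) (x j) := dist_triangle _ _ _
    have hc1 : dist y (γ t) = dist (γ t) y := dist_comm _ _
    have hc2 : dist y (x i) = dist (x i) y := dist_comm _ _
    linarith
  · cases isEmpty_or_nonempty X with
    | inl h =>
      refine ⟨∅, countable_empty, empty_subset _, fun δ' _ => ?_⟩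
      have : {p : X | dist p (x i) - dist p (x j) = δ'} = ∅ := eq_empty_of_isEmpty _
      simp [this]
    | inr h =>
      obtain ⟨x0⟩ := h
      have hsf : SigmaFinite m :=
        ⟨⟨⟨fun n => Metric.closedBall x0 n, fun _ => trivial,
          fun n => hm _ Metric.isBounded_closedBall,
          Metric.iUnion_closedBall_nat x0⟩⟩⟩
      have hg : Measurable fun p : X => dist p (x i) - dist p (x j) :=
        ((continuous_id.dist continuous_const).sub
          (continuous_id.dist continuous_const)).measurable
      have hcnt := Measure.countable_meas_level_set_pos (μ := m) hg
      refine ⟨Set.Ioi (-dist (x i) (x j)) ∩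
        {t : ℝ | 0 < m {p : X | dist p (x i) - dist p (x j) = t}},
        hcnt.mono inter_subset_right, inter_subset_left, ?_⟩
      intro δ' hδ'
      obtain ⟨hδ'1, hδ'2⟩ := hδ'
      by_contra hne
      exact hδ'2 ⟨hδ'1, pos_iff_ne_zero.mpr hne⟩
end

section
/- Let (X,d) be a metric space and let {z_i}_{i∈I} (I ⊆ ℕ) be a maximal 4π-separated collection of points, i.e. d(z_i,z_j) ≥ 4π for all i ≠ j and for every x ∈ X there exists i ∈ I with d(x,z_i) < 4π. Let η ∈ (0, π/64), let x_i ∈ X satisfy d(x_i,z_i) < η for every i ∈ I, and let δ ∈ (π/16, π/8). Define, with s := δ − 2η, the sets U_{i,j}^s := {x ∈ X : d(x,x_i) − d(x,x_j) < s} and T_i^s := (⋂_{j∈I, j>i} U_{i,j}^s) ∩ (⋂_{j∈I, j<i} U_{i,j}^{−s}). Then T_i^{δ−2η} ⊆ B_{4π+δ+η}(x_i) for every i ∈ I. -/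
open Set

/-- `U_{i,j}^s = {x : d(x,x_i) − d(x,x_j) < s}`. -/
def Uset {X : Type*} [MetricSpace X] (x : ℕ → X) (i j : ℕ) (s : ℝ) : Set X :=
  {p | dist p (x i) - dist p (x j) < s}

/-- `T_i^s = (⋂_{j ∈ I, j > i} U_{i,j}^s) ∩ (⋂_{j ∈ I, j < i} U_{i,j}^{−s})`. -/
def Tset {X : Type*} [MetricSpace X] (I : Set ℕ) (x : ℕ → X) (i : ℕ) (s : ℝ) : Set X :=
  (⋂ j ∈ {j | j ∈ I ∧ i < j}, Uset x i j s) ∩ (⋂ j ∈ {j | j ∈ I ∧ j < i}, Uset x i j (-s))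

/-- if `{z_i}` is a maximal `4π`-separated family, `η ∈ (0,π/64)`,
`d(x_i,z_i) < η`, and `δ ∈ (π/16,π/8)`, then `T_i^{δ−2η} ⊆ B_{4π+δ+η}(x_i)`. -/
theorem Tset_subset_ball
    {X : Type*} [MetricSpace X]
    (I : Set ℕ) (z x : ℕ → X)
    (hsep : ∀ i ∈ I, ∀ j ∈ I, i ≠ j → 4 * Real.pi ≤ dist (z i) (z j))
    (hmax : ∀ p : X, ∃ i ∈ I, dist p (z i) < 4 * Real.pi)
    (η : ℝ) (hη : η ∈ Set.Ioo 0 (Real.pi / 64))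
    (hx : ∀ i ∈ I, dist (x i) (z i) < η)
    (δ : ℝ) (hδ : δ ∈ Set.Ioo (Real.pi / 16) (Real.pi / 8))
    (i : ℕ) (hi : i ∈ I) :
    Tset I x i (δ - 2 * η) ⊆ Metric.ball (x i) (4 * Real.pi + δ + η) := by
  have hpi := Real.pi_pos
  obtain ⟨hη0, hη1⟩ := hη
  obtain ⟨hδ0, hδ1⟩ := hδ
  intro p hp
  obtain ⟨hp1, hp2⟩ := hp
  obtain ⟨j, hj, hpj⟩ := hmax p
  simp only [Metric.mem_ball]
  by_cases hij : j = i
  · subst hij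
    have : dist p (x j) ≤ dist p (z j) + dist (x j) (z j) := dist_triangle_right _ _ _
    nlinarith [hx j hj]
  rcases lt_or_gt_of_ne (Ne.symm hij) with h | h
  · have hU : p ∈ Uset x i j (δ - 2*η) := by
      have := mem_iInter₂.mp hp1 j ⟨hj, h⟩; exact this
    have hb : dist p (x j) ≤ dist p (z j) + dist (x j) (z j) := dist_triangle_right _ _ _
    have := hx j hj
    simp only [Uset, Set.mem_setOf_eq] at hU
    linarith
  · have hU : p ∈ Uset x i j (-(δ - 2*η)) := by
      have := mem_iInter₂.mp hp2 j ⟨hj, h⟩; exact this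
    have hb : dist p (x j) ≤ dist p (z j) + dist (x j) (z j) := dist_triangle_right _ _ _
    have := hx j hj
    simp only [Uset, Set.mem_setOf_eq] at hU
    linarith
end

section
/- Let N ∈ (1,∞), p > N/2 and K < 0. Define h(t) := sinh(√(−K/(N−1))·t)^{N−1} for t > 0 and v(r) := ∫₀^r h(t) dt. Then the improper integral ∫₀^∞ h(t)·(t/v(t))^{1+1/(2p−1)} dt is finite. -/
/-!
Write `h(t) = sinh(a t)^m` and `v(t) = ∫₀ᵗ h` with `a > 0`, `m = N - 1 > 0`, and
`q = 1 + 1/(2p - 1) > 1`. Near `0`, `h(t) ≲ t^m` and `v(t) ≳ t^{m+1}`, so the integrand is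
`≲ t^{m(1-q)}`, integrable because `m(q - 1) < 1` is exactly `p > N/2`. For large `t`,
`h(t) ≲ e^{amt}` while `v(t) ≥ h(t - 1) ≳ e^{am(t-1)}`, so the integrand is
`≲ t^q e^{-am(q-1)t}`, which decays exponentially because `q > 1`.
-/

open Real MeasureTheory Set

namespace Real

lemma sinh_le_exp (x : ℝ) : sinh x ≤ exp x := by
  linarith [exp_sub_sinh x, cosh_pos x]

lemma sinh_le_mul_exp (x : ℝ) : sinh x ≤ x * exp x := by
  rw [sinh_eq]
  have h1 : 1 - 2 * x ≤ exp (-(2 * x)) := by linarith [add_one_le_exp (-(2 * x))]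
  have h2 : exp (-x) = exp x * exp (-(2 * x)) := by rw [← exp_add]; ring_nf
  nlinarith [exp_pos x]

lemma exp_div_four_le_sinh {x : ℝ} (hx : 1 ≤ x) : exp x / 4 ≤ sinh x := by
  rw [sinh_eq]
  have h1 : exp (-x) ≤ 1 := exp_le_one_iff.mpr (by linarith)
  have h2 : 2 ≤ exp x := by linarith [add_one_le_exp x]
  linarith

end Real

noncomputable def modelDensity (a m t : ℝ) : ℝ := sinh (a * t) ^ m

noncomputable def modelVolume (a m t : ℝ) : ℝ := ∫ s in Ioo 0 t, modelDensity a m s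

noncomputable def bishopGromovIntegrand (a m q t : ℝ) : ℝ :=
  modelDensity a m t * (t / modelVolume a m t) ^ q

section

variable {a m q : ℝ}

lemma modelDensity_nonneg (ha : 0 ≤ a) {t : ℝ} (ht : 0 ≤ t) : 0 ≤ modelDensity a m t :=
  rpow_nonneg (sinh_nonneg_iff.mpr (mul_nonneg ha ht)) m

lemma continuous_modelDensity (hm : 0 ≤ m) : Continuous (modelDensity a m) :=
  (continuous_sinh.comp (continuous_const.mul continuous_id)).rpow_const fun _ => Or.inr hm

lemma monotoneOn_modelDensity (ha : 0 ≤ a) (hm : 0 ≤ m) :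
    MonotoneOn (modelDensity a m) (Ici 0) :=
  fun _ hs _ _ hst => rpow_le_rpow (sinh_nonneg_iff.mpr (mul_nonneg ha hs))
    (sinh_le_sinh.mpr (mul_le_mul_of_nonneg_left hst ha)) hm

lemma mul_rpow_le_modelDensity (ha : 0 ≤ a) (hm : 0 ≤ m) {t : ℝ} (ht : 0 ≤ t) :
    (a * t) ^ m ≤ modelDensity a m t :=
  rpow_le_rpow (mul_nonneg ha ht) (self_le_sinh_iff.mpr (mul_nonneg ha ht)) hm

lemma modelDensity_le_exp_mul_rpow (ha : 0 ≤ a) (hm : 0 ≤ m) {t T : ℝ} (ht : 0 ≤ t)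
    (htT : t ≤ T) : modelDensity a m t ≤ exp (a * T * m) * (a * t) ^ m := by
  have hat : 0 ≤ a * t := mul_nonneg ha ht
  have hsinh : sinh (a * t) ≤ a * t * exp (a * T) :=
    (sinh_le_mul_exp _).trans
      (mul_le_mul_of_nonneg_left (exp_le_exp.mpr (mul_le_mul_of_nonneg_left htT ha)) hat)
  calc modelDensity a m t ≤ (a * t * exp (a * T)) ^ m :=
        rpow_le_rpow (sinh_nonneg_iff.mpr hat) hsinh hm
    _ = exp (a * T * m) * (a * t) ^ m := by
        rw [mul_rpow hat (exp_pos _).le, ← exp_mul, mul_comm]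

lemma modelDensity_le_exp (ha : 0 ≤ a) (hm : 0 ≤ m) {t : ℝ} (ht : 0 ≤ t) :
    modelDensity a m t ≤ exp (a * t * m) := by
  rw [exp_mul]
  exact rpow_le_rpow (sinh_nonneg_iff.mpr (mul_nonneg ha ht)) (sinh_le_exp _) hm

lemma exp_div_rpow_le_modelDensity (hm : 0 ≤ m) {t : ℝ} (ht : 1 ≤ a * t) :
    exp (a * t * m) / 4 ^ m ≤ modelDensity a m t := by
  rw [exp_mul, ← div_rpow (exp_pos _).le (by norm_num)]
  exact rpow_le_rpow (by positivity) (exp_div_four_le_sinh ht) hm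

lemma modelVolume_eq_intervalIntegral {t : ℝ} (ht : 0 ≤ t) :
    modelVolume a m t = ∫ s in 0..t, modelDensity a m s := by
  rw [intervalIntegral.integral_of_le ht, integral_Ioc_eq_integral_Ioo, modelVolume]

lemma modelVolume_nonneg (ha : 0 ≤ a) (t : ℝ) : 0 ≤ modelVolume a m t :=
  setIntegral_nonneg measurableSet_Ioo fun _ hs => modelDensity_nonneg ha hs.1.le

lemma mul_rpow_mul_div_le_modelVolume (ha : 0 ≤ a) (hm : 0 ≤ m) {t : ℝ} (ht : 0 < t) :
    (a * t) ^ m * t / (m + 1) ≤ modelVolume a m t := by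
  have hpow : ∫ s in 0..t, a ^ m * s ^ m = (a * t) ^ m * t / (m + 1) := by
    rw [intervalIntegral.integral_const_mul, integral_rpow (Or.inl (by linarith)),
      zero_rpow (by linarith), rpow_add_one ht.ne', mul_rpow ha ht.le]
    ring
  rw [modelVolume_eq_intervalIntegral ht.le, ← hpow]
  refine intervalIntegral.integral_mono_on ht.le
    ((intervalIntegral.intervalIntegrable_rpow' (by linarith)).const_mul _)
    ((continuous_modelDensity hm).intervalIntegrable _ _) fun s hs => ?_
  rw [← mul_rpow ha hs.1]
  exact mul_rpow_le_modelDensity ha hm hs.1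

lemma sub_mul_modelDensity_le_modelVolume (ha : 0 ≤ a) (hm : 0 ≤ m) {s t : ℝ} (hs : 0 ≤ s)
    (hst : s ≤ t) : (t - s) * modelDensity a m s ≤ modelVolume a m t := by
  rw [modelVolume_eq_intervalIntegral (hs.trans hst)]
  calc (t - s) * modelDensity a m s = ∫ _ in s..t, modelDensity a m s := by simp
    _ ≤ ∫ u in s..t, modelDensity a m u :=
        intervalIntegral.integral_mono_on hst intervalIntegrable_const
          ((continuous_modelDensity hm).intervalIntegrable _ _)
          fun u hu => monotoneOn_modelDensity ha hm hs (hs.trans hu.1) hu.1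
    _ ≤ ∫ u in 0..t, modelDensity a m u :=
        intervalIntegral.integral_mono_interval hs hst le_rfl
          (ae_restrict_of_forall_mem measurableSet_Ioc fun u hu =>
            modelDensity_nonneg ha hu.1.le)
          ((continuous_modelDensity hm).intervalIntegrable _ _)

lemma modelVolume_pos (ha : 0 < a) (hm : 0 ≤ m) {t : ℝ} (ht : 0 < t) : 0 < modelVolume a m t :=
  lt_of_lt_of_le (by positivity) (mul_rpow_mul_div_le_modelVolume ha.le hm ht)

lemma continuousOn_modelVolume (hm : 0 ≤ m) : ContinuousOn (modelVolume a m) (Ici 0) :=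
  (intervalIntegral.continuous_primitive
    (fun _ _ => (continuous_modelDensity hm).intervalIntegrable _ _) 0).continuousOn.congr
    fun _ ht => modelVolume_eq_intervalIntegral ht

lemma bishopGromovIntegrand_nonneg (ha : 0 ≤ a) {t : ℝ} (ht : 0 ≤ t) :
    0 ≤ bishopGromovIntegrand a m q t :=
  mul_nonneg (modelDensity_nonneg ha ht) (rpow_nonneg (div_nonneg ht (modelVolume_nonneg ha t)) q)

lemma continuousOn_bishopGromovIntegrand (ha : 0 < a) (hm : 0 ≤ m) (hq : 0 ≤ q) :
    ContinuousOn (bishopGromovIntegrand a m q) (Ioi 0) :=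
  (continuous_modelDensity hm).continuousOn.mul <|
    (continuousOn_id.div ((continuousOn_modelVolume hm).mono Ioi_subset_Ici_self)
      fun _ ht => (modelVolume_pos ha hm ht).ne').rpow_const fun _ _ => Or.inr hq

lemma bishopGromovIntegrand_le (ha : 0 ≤ a) (hq : 0 ≤ q) {t H L : ℝ} (ht : 0 ≤ t)
    (hH : modelDensity a m t ≤ H) (hL : 0 < L) (hLv : L ≤ modelVolume a m t) :
    bishopGromovIntegrand a m q t ≤ H * (t / L) ^ q :=
  mul_le_mul hH (rpow_le_rpow (div_nonneg ht (modelVolume_nonneg ha t))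
      (div_le_div_of_nonneg_left ht hL hLv) hq)
    (rpow_nonneg (div_nonneg ht (modelVolume_nonneg ha t)) q)
    ((modelDensity_nonneg ha ht).trans hH)

lemma bishopGromovIntegrand_le_rpow (ha : 0 < a) (hm : 0 ≤ m) (hq : 0 ≤ q) {t T : ℝ}
    (ht : 0 < t) (htT : t ≤ T) :
    bishopGromovIntegrand a m q t ≤ exp (a * T * m) * (m + 1) ^ q * (a * t) ^ (m - m * q) := by
  have hat : 0 < a * t := mul_pos ha ht
  have hL : 0 < (a * t) ^ m * t / (m + 1) := by positivity
  refine (bishopGromovIntegrand_le ha.le hq ht.le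
    (modelDensity_le_exp_mul_rpow ha.le hm ht.le htT) hL
    (mul_rpow_mul_div_le_modelVolume ha.le hm ht)).trans_eq ?_
  rw [show t / ((a * t) ^ m * t / (m + 1)) = (m + 1) / (a * t) ^ m by field_simp,
    div_rpow (by linarith) (by positivity), ← rpow_mul hat.le, rpow_sub hat]
  ring

lemma bishopGromovIntegrand_le_rpow_mul_exp (ha : 0 < a) (hm : 0 ≤ m) (hq : 0 ≤ q) {t : ℝ}
    (ht : 1 ≤ a * (t - 1)) :
    bishopGromovIntegrand a m q t ≤
      (4 ^ m) ^ q * exp (a * m * q) * (t ^ q * exp (-(a * m * (q - 1)) * t)) := by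
  have ht1 : 0 ≤ t - 1 := (pos_of_mul_pos_right (by linarith) ha.le).le
  have ht0 : 0 ≤ t := by linarith
  have hL : 0 < exp (a * (t - 1) * m) / 4 ^ m := by positivity
  refine (bishopGromovIntegrand_le ha.le hq ht0 (modelDensity_le_exp ha.le hm ht0)
    hL ((exp_div_rpow_le_modelDensity hm ht).trans ?_)).trans_eq ?_
  · simpa using sub_mul_modelDensity_le_modelVolume ha.le hm ht1 (sub_le_self t zero_le_one)
  rw [div_div_eq_mul_div, div_rpow (by positivity) (exp_pos _).le, mul_rpow ht0
    (by positivity), ← exp_mul, div_eq_mul_inv, ← exp_neg]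
  have hexp : exp (a * t * m) * exp (-(a * (t - 1) * m * q)) =
      exp (a * m * q) * exp (-(a * m * (q - 1)) * t) := by
    rw [← exp_add, ← exp_add]
    ring_nf
  linear_combination (t ^ q * (4 ^ m) ^ q) * hexp

lemma integrableOn_bishopGromovIntegrand_of_le {s : Set ℝ} {g : ℝ → ℝ} (ha : 0 < a)
    (hm : 0 ≤ m) (hq : 0 ≤ q) (hs : MeasurableSet s) (hs0 : s ⊆ Ioi 0) (hg : IntegrableOn g s)
    (hle : ∀ t ∈ s, bishopGromovIntegrand a m q t ≤ g t) :
    IntegrableOn (bishopGromovIntegrand a m q) s :=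
  hg.mono' (((continuousOn_bishopGromovIntegrand ha hm hq).mono hs0).aestronglyMeasurable hs)
    (ae_restrict_of_forall_mem hs fun t ht => by
      rw [norm_of_nonneg (bishopGromovIntegrand_nonneg ha.le (le_of_lt (hs0 ht)))]
      exact hle t ht)

lemma integrableOn_Ioc_bishopGromovIntegrand (ha : 0 < a) (hm : 0 ≤ m) (hq : 0 ≤ q)
    (hmq : m * (q - 1) < 1) (T : ℝ) : IntegrableOn (bishopGromovIntegrand a m q) (Ioc 0 T) := by
  rcases le_total T 0 with hT | hT
  · simp [Ioc_eq_empty_of_le hT]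
  have hpow : IntegrableOn (fun t => (exp (a * T * m) * (m + 1) ^ q * a ^ (m - m * q)) *
      t ^ (m - m * q)) (Ioc 0 T) :=
    ((intervalIntegrable_iff_integrableOn_Ioc_of_le hT).mp
      (intervalIntegral.intervalIntegrable_rpow' (by linarith))).const_mul _
  refine integrableOn_bishopGromovIntegrand_of_le ha hm hq measurableSet_Ioc Ioc_subset_Ioi_self
    hpow fun t ht => (bishopGromovIntegrand_le_rpow ha hm hq ht.1 ht.2).trans_eq ?_
  rw [mul_rpow ha.le ht.1.le]
  ring

lemma integrableOn_Ioi_bishopGromovIntegrand (ha : 0 < a) (hm : 0 < m) (hq : 1 < q) {T : ℝ}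
    (hT : 1 ≤ a * (T - 1)) : IntegrableOn (bishopGromovIntegrand a m q) (Ioi T) := by
  have hT0 : 0 ≤ T := by linarith [pos_of_mul_pos_right (by linarith : 0 < a * (T - 1)) ha.le]
  have hdecay : IntegrableOn (fun t => (4 ^ m) ^ q * exp (a * m * q) *
      (t ^ q * exp (-(a * m * (q - 1)) * t))) (Ioi T) := by
    have h := integrableOn_rpow_mul_exp_neg_mul_rpow (s := q) (p := 1) (by linarith) one_pos
      (mul_pos (mul_pos ha hm) (sub_pos.mpr hq))
    simp only [rpow_one] at h
    exact (h.mono_set (Ioi_subset_Ioi hT0)).const_mul _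
  refine integrableOn_bishopGromovIntegrand_of_le ha hm.le (by linarith) measurableSet_Ioi
    (Ioi_subset_Ioi hT0) hdecay fun t ht => bishopGromovIntegrand_le_rpow_mul_exp ha hm.le
      (by linarith) (hT.trans (mul_le_mul_of_nonneg_left (by linarith [mem_Ioi.mp ht]) ha.le))

theorem integrableOn_bishopGromovIntegrand (ha : 0 < a) (hm : 0 < m) (hq : 1 < q)
    (hmq : m * (q - 1) < 1) : IntegrableOn (bishopGromovIntegrand a m q) (Ioi 0) := by
  have hT : 1 ≤ a * (1 + a⁻¹ - 1) := by rw [add_sub_cancel_left, mul_inv_cancel₀ ha.ne']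
  rw [← Ioc_union_Ioi_eq_Ioi (by positivity : (0 : ℝ) ≤ 1 + a⁻¹)]
  exact (integrableOn_Ioc_bishopGromovIntegrand ha hm.le (by linarith) hmq _).union
    (integrableOn_Ioi_bishopGromovIntegrand ha hm hq hT)

end

/-- for `N ∈ (1,∞)`, `p > N/2` and `K < 0`, with
`h(t) = sinh(√(−K/(N−1)) t)^{N−1}` and `v(r) = ∫₀^r h`, the integral
`∫₀^∞ h(t) (t/v(t))^{1+1/(2p−1)} dt` is finite. -/
theorem bishopGromov_constant_integrable_negative_curvature
    (N p K : ℝ) (hN : 1 < N) (hp : N / 2 < p) (hK : K < 0) :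
    IntegrableOn
      (fun t : ℝ =>
        Real.sinh (Real.sqrt (-K / (N - 1)) * t) ^ (N - 1) *
          (t / ∫ s in Set.Ioo (0:ℝ) t,
              Real.sinh (Real.sqrt (-K / (N - 1)) * s) ^ (N - 1)) ^ (1 + 1 / (2 * p - 1)))
      (Set.Ioi 0) := by
  have hm : 0 < N - 1 := by linarith
  have h2p : 0 < 2 * p - 1 := by linarith
  have hmq : (N - 1) * (1 + 1 / (2 * p - 1) - 1) < 1 := by
    rw [add_sub_cancel_left, mul_one_div, div_lt_one h2p]
    linarith
  exact integrableOn_bishopGromovIntegrand (sqrt_pos.mpr (div_pos (neg_pos.mpr hK) hm)) hm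
    (lt_add_of_pos_right 1 (one_div_pos.mpr h2p)) hmq
end

section
/- Let −∞ < a < b < +∞ and let f : [a,b] → ℝ. Then f is non-increasing on [a,b] if and only if the following two conditions hold: (i) f is left lower semicontinuous on (a,b], i.e. liminf_{s↑r} f(s) ≥ f(r) for every r ∈ (a,b]; and (ii) for every r ∈ [a,b), limsup_{t↓0} (f(r+t) − f(r))/t ≤ 0. -/
open Set Filter

/-- characterization of monotonicity: `f` is non-increasing on `[a,b]`
iff it is left lower semicontinuous on `(a,b]` and its upper right Dini derivative
(computed in the extended reals) is `≤ 0` at every point of `[a,b)`. -/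
theorem antitoneOn_iff_left_lsc_and_dini
    (a b : ℝ) (hab : a < b) (f : ℝ → ℝ) :
    AntitoneOn f (Set.Icc a b) ↔
      ((∀ r ∈ Set.Ioc a b,
          ((f r : EReal) ≤
            Filter.liminf (fun s : ℝ => ((f s : ℝ) : EReal)) (nhdsWithin r (Set.Iio r)))) ∧
        (∀ r ∈ Set.Ico a b,
          Filter.limsup (fun t : ℝ => (((f (r + t) - f r) / t : ℝ) : EReal))
            (nhdsWithin 0 (Set.Ioi 0)) ≤ (0 : EReal))) := by
  constructor
  · intro hf
    refine ⟨fun r hr => ?_, fun r hr => ?_⟩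
    · refine Filter.le_liminf_of_le (by isBoundedDefault) ?_
      have hmem : Set.Ioo a r ∈ nhdsWithin r (Set.Iio r) :=
        Ioo_mem_nhdsLT_of_mem ⟨hr.1, le_refl r⟩
      filter_upwards [hmem] with s hs
      exact EReal.coe_le_coe_iff.mpr
        (hf ⟨hs.1.le, hs.2.le.trans hr.2⟩ ⟨hr.1.le, hr.2⟩ hs.2.le)
    · refine Filter.limsup_le_of_le (by isBoundedDefault) ?_
      have hmem : Set.Ioo 0 (b - r) ∈ nhdsWithin 0 (Set.Ioi 0) :=
        Ioo_mem_nhdsGT_of_mem ⟨le_refl 0, sub_pos.mpr hr.2⟩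
      filter_upwards [hmem] with t ht
      have h1 : f (r + t) ≤ f r := by
        apply hf ⟨hr.1, hr.2.le⟩ ⟨hr.1.trans (by linarith [ht.1]), by linarith [ht.2]⟩
        linarith [ht.1]
      have : ((f (r + t) - f r) / t : ℝ) ≤ 0 :=
        div_nonpos_of_nonpos_of_nonneg (by linarith) ht.1.le
      exact_mod_cast this
  · rintro ⟨hlsc, hdini⟩
    intro x hx y hy hxy
    rcases eq_or_lt_of_le hxy with rfl | hxy
    · exact le_refl _
    have key : ∀ ε : ℝ, 0 < ε → f y ≤ f x + ε * (y - x) := by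
      intro ε hε
      set S : Set ℝ := {t | t ∈ Set.Icc x y ∧ f t ≤ f x + ε * (t - x)} with hS
      have hxS : x ∈ S := ⟨⟨le_refl x, hxy.le⟩, by simp⟩
      have hSbdd : BddAbove S := ⟨y, fun t ht => ht.1.2⟩
      have hSne : S.Nonempty := ⟨x, hxS⟩
      set c := sSup S with hc
      have hxc : x ≤ c := le_csSup hSbdd hxS
      have hcy : c ≤ y := csSup_le hSne (fun t ht => ht.1.2)
      have hcS : c ∈ S := by
        by_contra hcn
        have hlt : ∀ s ∈ S, s < c := fun s hs =>
          lt_of_le_of_ne (le_csSup hSbdd hs) (fun h => hcn (h ▸ hs))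
        have hxc' : x < c := hlt x hxS
        have h1 : (f c : EReal) ≤
            Filter.liminf (fun s : ℝ => ((f s : ℝ) : EReal)) (nhdsWithin c (Set.Iio c)) :=
          hlsc c ⟨lt_of_le_of_lt hx.1 hxc', hcy.trans hy.2⟩
        have h2 : Filter.liminf (fun s : ℝ => ((f s : ℝ) : EReal)) (nhdsWithin c (Set.Iio c))
            ≤ ((f x + ε * (c - x) : ℝ) : EReal) := by
          apply Filter.liminf_le_of_frequently_le'
          rw [Filter.frequently_iff]
          intro U hU
          rcases mem_nhdsLT_iff_exists_Ioo_subset.mp hU with ⟨l, hl, hsub⟩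
          have hmax : max l x < c := max_lt hl hxc'
          obtain ⟨s, hsS, hs⟩ := exists_lt_of_lt_csSup hSne hmax
          have hsl : l < s := (le_max_left l x).trans_lt hs
          have hsx : x ≤ s := ((le_max_right l x).trans_lt hs).le
          have hsc : s < c := hlt s hsS
          refine ⟨s, hsub ⟨hsl, hsc⟩, ?_⟩
          apply EReal.coe_le_coe_iff.mpr
          have := hsS.2
          nlinarith
        have : f c ≤ f x + ε * (c - x) := EReal.coe_le_coe_iff.mp (h1.trans h2)
        exact hcn ⟨⟨hxc, hcy⟩, this⟩
      have hcy' : c = y := by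
        by_contra hne
        have hcy2 : c < y := lt_of_le_of_ne hcy hne
        have hd := hdini c ⟨hx.1.trans hxc, lt_of_lt_of_le hcy2 hy.2⟩
        have hd' : Filter.limsup (fun t : ℝ => (((f (c + t) - f c) / t : ℝ) : EReal))
            (nhdsWithin 0 (Set.Ioi 0)) < (ε : EReal) :=
          lt_of_le_of_lt hd (by exact_mod_cast hε)
        have hev := Filter.eventually_lt_of_limsup_lt hd'
        have hmem : Set.Ioo 0 (y - c) ∈ nhdsWithin 0 (Set.Ioi 0) :=
          Ioo_mem_nhdsGT_of_mem ⟨le_refl 0, sub_pos.mpr hcy2⟩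
        obtain ⟨t, ht1, ht2⟩ := (hev.and (Filter.eventually_of_mem hmem (fun _ h => h))).exists
        have ht1' : (f (c + t) - f c) / t < ε := EReal.coe_lt_coe_iff.mp ht1
        have htpos : 0 < t := ht2.1
        have hquot : f (c + t) - f c < ε * t := by
          rwa [div_lt_iff₀ htpos] at ht1'
        have hctS : c + t ∈ S := by
          refine ⟨⟨hxc.trans (by linarith), by linarith [ht2.2]⟩, ?_⟩
          have := hcS.2
          nlinarith
        have := le_csSup hSbdd hctS
        linarith
      have := hcS.2
      rw [hcy'] at this
      exact this
    apply le_of_forall_pos_le_add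
    intro δ hδ
    have hyx : 0 < y - x := sub_pos.mpr hxy
    have := key (δ / (y - x)) (div_pos hδ hyx)
    rwa [div_mul_cancel₀ _ (ne_of_gt hyx)] at this
end
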